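/- Let F be a nonempty closed set of d × d density matrices and let ρ be a d × d density matrix with ρ ∉ F and R_F(ρ) finite. Then sup { s > 0 : for every σ ∈ F there exists m ∈ {2, …, d} with S_{m,ρ,s}(σ) < 0 } = R_F(ρ). -/

import Mathlib

/-! By Newton's identities, `S_m(A)` is the `m`-th elementary symmetric function of the
eigenvalues of a Hermitian `A`, and a finite family of reals is nonnegative iff all its
elementary symmetric functions are (evaluate Vieta's `∏ (X + λⱼ)` at `-λᵢ` for a negative
`λᵢ`). For trace one, `e₀ = e₁ = 1` and `eₘ = 0` for `m > d`, so `A` is positive semidefinite iff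
`S_m(A) ≥ 0` for `2 ≤ m ≤ d`. Thus `s > 0` is a witness iff `(1+s)σ - ρ` is positive
semidefinite for no `σ ∈ F`, i.e. iff `(ρ + sτ)/(1+s) ∈ F` for no density matrix `τ`. The
latter condition is upward closed in `s`, so the witnesses and the feasible weights of the
robustness split the positive reals at a single point, which is both the supremum of the
first set and the infimum of the second. -/

open scoped ComplexOrder ENNReal

/-- A density matrix: positive semidefinite (hence Hermitian) with trace 1. -/
def IsDensityMatrix {d : ℕ} (A : Matrix (Fin d) (Fin d) ℂ) : Prop :=
  A.PosSemidef ∧ A.trace = 1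

/-- The generalized robustness `R_F(ρ)`, valued in the extended nonnegative reals:
the infimum of `s ≥ 0` such that `(ρ + sτ)/(1 + s) ∈ F` for some density matrix `τ`
(`+∞` if no such `s` exists). -/
noncomputable def Robustness {d : ℕ} (F : Set (Matrix (Fin d) (Fin d) ℂ))
    (ρ : Matrix (Fin d) (Fin d) ℂ) : ℝ≥0∞ :=
  ⨅ s ∈ {s : ℝ | 0 ≤ s ∧ ∃ τ, IsDensityMatrix τ ∧
      ((1 : ℂ) + (s : ℂ))⁻¹ • (ρ + (s : ℂ) • τ) ∈ F}, ENNReal.ofReal s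

/-- `Spoly A m` is the recursively defined quantity `S_m(A)`. -/
noncomputable def Spoly {d : ℕ} (A : Matrix (Fin d) (Fin d) ℂ) : ℕ → ℂ
  | 0 => 1
  | m + 1 => ((m : ℂ) + 1)⁻¹ *
      ∑ l ∈ Finset.range (m + 1), (-1 : ℂ) ^ l * (A ^ (l + 1)).trace * Spoly A (m - l)

/-- `Sres ρ s m η = S_{m,ρ,s}(η) = S_m(((1+s)η − ρ)/s)`. -/
noncomputable def Sres {d : ℕ} (ρ : Matrix (Fin d) (Fin d) ℂ) (s : ℝ) (m : ℕ)
    (η : Matrix (Fin d) (Fin d) ℂ) : ℂ :=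
  Spoly ((s : ℂ)⁻¹ • (((1 : ℂ) + (s : ℂ)) • η - ρ)) m

open Finset Matrix

namespace MvPolynomial

theorem mul_esymm_succ_eq_sum_range (σ R : Type*) [Fintype σ] [CommRing R] (m : ℕ) :
    ((m : MvPolynomial σ R) + 1) * esymm σ R (m + 1) =
      ∑ l ∈ range (m + 1), (-1) ^ l * psum σ R (l + 1) * esymm σ R (m - l) := by
  have h := mul_esymm_eq_sum σ R (m + 1)
  rw [sum_filter, Nat.sum_antidiagonal_succ', if_neg (lt_irrefl _), zero_add,
    Nat.sum_antidiagonal_eq_sum_range_succ_mk, ← sum_range_reflect, mul_sum] at h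
  push_cast at h
  rw [h]
  refine sum_congr rfl fun l hl => ?_
  obtain ⟨i, rfl⟩ := Nat.exists_eq_add_of_le (Nat.lt_succ_iff.mp (mem_range.mp hl))
  rw [if_pos (by omega), Nat.add_sub_cancel_left, Nat.add_sub_cancel_right]
  have hsign : (-1 : MvPolynomial σ R) ^ (l + i + 1 + 1) * (-1) ^ i = (-1) ^ l := by
    rw [← pow_add, show l + i + 1 + 1 + i = l + 2 * (i + 1) by ring, pow_add, pow_mul]
    simp
  linear_combination (esymm σ R i * psum σ R (l + 1)) * hsign

end MvPolynomial

namespace Multiset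

variable {R : Type*}

theorem esymm_eq_zero_of_card_lt [CommSemiring R] {s : Multiset R} {n : ℕ} (h : card s < n) :
    s.esymm n = 0 := by
  simp [esymm, powersetCard_eq_empty n h]

theorem esymm_map_ringHom {S : Type*} [CommSemiring R] [CommSemiring S] (f : R →+* S)
    (s : Multiset R) (n : ℕ) : (s.map f).esymm n = f (s.esymm n) := by
  simp [esymm, powersetCard_map, map_multiset_sum, map_multiset_prod, Multiset.map_map]

theorem esymm_nonneg [CommSemiring R] [PartialOrder R] [IsOrderedRing R] {s : Multiset R}
    (h : ∀ x ∈ s, 0 ≤ x) (n : ℕ) : 0 ≤ s.esymm n :=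
  sum_nonneg fun _ ht => by
    obtain ⟨u, hu, rfl⟩ := mem_map.mp ht
    exact prod_nonneg fun x hx => h x (mem_of_le (mem_powersetCard.mp hu).1 hx)

theorem nonneg_of_forall_esymm_nonneg [CommRing R] [LinearOrder R] [IsStrictOrderedRing R]
    {s : Multiset R} (h : ∀ n, 0 ≤ s.esymm n) {x : R} (hx : x ∈ s) : 0 ≤ x := by
  by_contra! hneg
  have hpos : 0 < -x := neg_pos.mpr hneg
  have hvieta := congrArg (Polynomial.eval (-x)) (Multiset.prod_X_add_C_eq_sum_esymm s)
  rw [Polynomial.eval_multiset_prod, Multiset.prod_eq_zero (by simpa using ⟨x, hx, by ring⟩),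
    Polynomial.eval_finsetSum] at hvieta
  simp only [Polynomial.eval_mul, Polynomial.eval_C, Polynomial.eval_pow, Polynomial.eval_X]
    at hvieta
  have : 0 < ∑ j ∈ Finset.range (card s + 1), s.esymm j * (-x) ^ (card s - j) := by
    refine lt_of_lt_of_le ?_ (Finset.single_le_sum
      (fun j _ => mul_nonneg (h j) (pow_nonneg hpos.le _)) (Finset.mem_range.mpr (Nat.succ_pos _)))
    simpa [esymm] using pow_pos hpos (card s)
  exact this.ne hvieta

end Multiset

theorem Matrix.IsHermitian.trace_pow {n 𝕜 : Type*} [Fintype n] [DecidableEq n] [RCLike 𝕜]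
    {A : Matrix n n 𝕜} (hA : A.IsHermitian) (k : ℕ) :
    (A ^ k).trace = ∑ i, (hA.eigenvalues i : 𝕜) ^ k := by
  conv_lhs => rw [hA.spectral_theorem, ← map_pow, Unitary.conjStarAlgAut_apply, trace_mul_cycle,
    Unitary.coe_star_mul_self, one_mul, diagonal_pow, trace_diagonal]
  simp

section Spoly

variable {d : ℕ} {A : Matrix (Fin d) (Fin d) ℂ}

theorem spoly_one : Spoly A 1 = A.trace := by
  simp [Spoly]

theorem spoly_eq_esymm {ι : Type*} [Fintype ι] (μ : ι → ℂ)
    (hμ : ∀ k, (A ^ (k + 1)).trace = ∑ i, μ i ^ (k + 1)) (m : ℕ) :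
    Spoly A m = (univ.val.map μ).esymm m := by
  induction m using Nat.strong_induction_on with
  | _ m ih =>
    cases m with
    | zero => simp [Spoly, Multiset.esymm]
    | succ m =>
      have hnewton := congrArg (MvPolynomial.aeval μ)
        (MvPolynomial.mul_esymm_succ_eq_sum_range ι ℂ m)
      simp only [map_mul, map_add, map_natCast, map_one, map_sum, map_pow, map_neg,
        MvPolynomial.aeval_esymm_eq_multiset_esymm, MvPolynomial.psum, MvPolynomial.aeval_X]
        at hnewton
      rw [Spoly, inv_mul_eq_iff_eq_mul₀ (Nat.cast_add_one_ne_zero m), hnewton]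
      refine sum_congr rfl fun l hl => ?_
      rw [hμ, ih (m - l) (by omega)]

theorem Matrix.IsHermitian.spoly_eq_esymm_eigenvalues (hA : A.IsHermitian) (m : ℕ) :
    Spoly A m = ((univ.val.map hA.eigenvalues).esymm m : ℂ) := by
  rw [spoly_eq_esymm _ (fun k => hA.trace_pow (k + 1)), ← Complex.ofRealHom_eq_coe,
    ← Multiset.esymm_map_ringHom, Multiset.map_map]
  rfl

theorem Matrix.IsHermitian.not_posSemidef_iff_exists_spoly_neg (hA : A.IsHermitian)
    (htr : 0 ≤ A.trace) : ¬ A.PosSemidef ↔ ∃ m ∈ Icc 2 d, Spoly A m < 0 := by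
  set s := univ.val.map hA.eigenvalues
  have hspoly (m : ℕ) : Spoly A m < 0 ↔ s.esymm m < 0 := by
    rw [hA.spoly_eq_esymm_eigenvalues]
    exact_mod_cast Iff.rfl
  rw [hA.posSemidef_iff_eigenvalues_nonneg]
  constructor
  · intro hnot
    by_contra! hall
    refine hnot fun i => Multiset.nonneg_of_forall_esymm_nonneg (fun m => ?_)
      (Multiset.mem_map_of_mem _ (mem_univ_val i))
    rcases Nat.lt_or_ge d m with hdm | hmd
    · exact (Multiset.esymm_eq_zero_of_card_lt (by simpa [s] using hdm)).ge
    rcases m with _ | _ | m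
    · simp [Multiset.esymm]
    · rw [← not_lt, ← hspoly, spoly_one]
      exact htr.not_gt
    · rw [← not_lt, ← hspoly]
      exact hall _ (mem_Icc.mpr ⟨by omega, hmd⟩)
  · rintro ⟨m, -, hm⟩ hpsd
    refine ((hspoly m).mp hm).not_ge (Multiset.esymm_nonneg (fun x hx => ?_) m)
    obtain ⟨i, -, rfl⟩ := Multiset.mem_map.mp hx
    exact hpsd i

end Spoly

section Robustness

variable {d : ℕ} {F : Set (Matrix (Fin d) (Fin d) ℂ)} {ρ σ : Matrix (Fin d) (Fin d) ℂ} {s t : ℝ}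

theorem exists_posSemidef_of_mixture_mem (hs : 0 ≤ s)
    (h : ∃ τ, IsDensityMatrix τ ∧ ((1 : ℂ) + (s : ℂ))⁻¹ • (ρ + (s : ℂ) • τ) ∈ F) :
    ∃ σ ∈ F, (((1 : ℂ) + (s : ℂ)) • σ - ρ).PosSemidef := by
  obtain ⟨τ, ⟨hτ, -⟩, hmem⟩ := h
  refine ⟨_, hmem, ?_⟩
  have hne : (1 : ℂ) + (s : ℂ) ≠ 0 := (show (0 : ℂ) < 1 + (s : ℂ) by positivity).ne'
  rw [smul_smul, mul_inv_cancel₀ hne, one_smul, add_sub_cancel_left]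
  exact hτ.smul (by positivity)

theorem mixture_mem_of_posSemidef (hσF : σ ∈ F) (hσ : σ.trace = 1) (hρ : ρ.trace = 1)
    (hs : 0 < s) (h : (((1 : ℂ) + (s : ℂ)) • σ - ρ).PosSemidef) :
    ∃ τ, IsDensityMatrix τ ∧ ((1 : ℂ) + (s : ℂ))⁻¹ • (ρ + (s : ℂ) • τ) ∈ F := by
  have hs' : (s : ℂ) ≠ 0 := Complex.ofReal_ne_zero.mpr hs.ne'
  have hne : (1 : ℂ) + (s : ℂ) ≠ 0 := (show (0 : ℂ) < 1 + (s : ℂ) by positivity).ne'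
  refine ⟨(s : ℂ)⁻¹ • (((1 : ℂ) + (s : ℂ)) • σ - ρ), ⟨h.smul (by positivity), ?_⟩, ?_⟩
  · rw [trace_smul, trace_sub, trace_smul, hσ, hρ, smul_eq_mul, smul_eq_mul]
    field_simp
    ring
  · rwa [smul_smul, mul_inv_cancel₀ hs', one_smul, add_sub_cancel, smul_smul,
      inv_mul_cancel₀ hne, one_smul]

theorem Matrix.PosSemidef.one_add_smul_sub_mono (hσ : σ.PosSemidef) (hst : s ≤ t)
    (h : (((1 : ℂ) + (s : ℂ)) • σ - ρ).PosSemidef) :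
    (((1 : ℂ) + (t : ℂ)) • σ - ρ).PosSemidef := by
  have hsplit : ((1 : ℂ) + (t : ℂ)) • σ - ρ
      = (((1 : ℂ) + (s : ℂ)) • σ - ρ) + ((t - s : ℝ) : ℂ) • σ := by
    push_cast
    module
  rw [hsplit]
  exact h.add (hσ.smul (by exact_mod_cast sub_nonneg.mpr hst))

theorem exists_sres_neg_iff (hσ : IsDensityMatrix σ) (hρ : IsDensityMatrix ρ) (hs : 0 < s) :
    (∃ m ∈ Icc 2 d, Sres ρ s m σ < 0) ↔ ¬ (((1 : ℂ) + (s : ℂ)) • σ - ρ).PosSemidef := by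
  set B := ((1 : ℂ) + (s : ℂ)) • σ - ρ
  have hs' : (s : ℂ) ≠ 0 := Complex.ofReal_ne_zero.mpr hs.ne'
  have hB : B.IsHermitian :=
    (hσ.1.smul (show (0 : ℂ) ≤ 1 + (s : ℂ) by positivity)).isHermitian.sub hρ.1.isHermitian
  have hscale : ((s : ℂ)⁻¹ • B).PosSemidef ↔ B.PosSemidef := by
    refine ⟨fun h => ?_, fun h => h.smul (by positivity)⟩
    simpa [smul_smul, hs'] using h.smul (show (0 : ℂ) ≤ s by positivity)
  have htr : ((s : ℂ)⁻¹ • B).trace = 1 := by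
    rw [trace_smul, trace_sub, trace_smul, hσ.2, hρ.2, smul_eq_mul, smul_eq_mul]
    field_simp
    ring
  rw [← hscale]
  exact ((hB.smul (IsSelfAdjoint.of_nonneg (by positivity))).not_posSemidef_iff_exists_spoly_neg
    (htr ▸ zero_le_one)).symm

end Robustness

theorem ENNReal.iSup_ofReal_eq_iInf_ofReal {L G : Set ℝ} (hLG : ∀ s ∈ L, ∀ t ∈ G, s ≤ t)
    (hcover : ∀ t, 0 < t → t ∉ G → t ∈ L) :
    ⨆ s ∈ L, ENNReal.ofReal s = ⨅ t ∈ G, ENNReal.ofReal t := by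
  refine le_antisymm
    (iSup₂_le fun s hs => le_iInf₂ fun t ht => ENNReal.ofReal_le_ofReal (hLG s hs t ht)) ?_
  by_contra! hlt
  obtain ⟨t, -, hsup, hinf⟩ := ENNReal.lt_iff_exists_real_btwn.mp hlt
  have ht : 0 < t := ENNReal.ofReal_pos.mp (pos_of_gt hsup)
  have htG : t ∉ G := fun htG => (iInf₂_le (f := fun t _ => ENNReal.ofReal t) t htG).not_gt hinf
  exact (le_iSup₂ (f := fun s _ => ENNReal.ofReal s) t (hcover t ht htG)).not_gt hsup

theorem sSup_witness_eq_robustness_general {d : ℕ}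
    (F : Set (Matrix (Fin d) (Fin d) ℂ))
    (hF : ∀ σ ∈ F, IsDensityMatrix σ)
    (ρ : Matrix (Fin d) (Fin d) ℂ) (hρ : IsDensityMatrix ρ) :
    (⨆ s ∈ {s : ℝ | 0 < s ∧ ∀ σ ∈ F, ∃ m ∈ Finset.Icc 2 d, Sres ρ s m σ < 0},
      ENNReal.ofReal s) = Robustness F ρ := by
  refine ENNReal.iSup_ofReal_eq_iInf_ofReal ?_ fun t ht htG => ⟨ht, fun σ hσF => ?_⟩
  · rintro s ⟨hs, hwit⟩ t ⟨ht, hmix⟩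
    by_contra! hts
    obtain ⟨σ, hσF, hpsd⟩ := exists_posSemidef_of_mixture_mem ht hmix
    exact (exists_sres_neg_iff (hF σ hσF) hρ hs).mp (hwit σ hσF)
      ((hF σ hσF).1.one_add_smul_sub_mono hts.le hpsd)
  · exact (exists_sres_neg_iff (hF σ hσF) hρ ht).mpr fun hpsd =>
      htG ⟨ht.le, mixture_mem_of_posSemidef hσF (hF σ hσF).2 hρ.2 ht hpsd⟩

/-- For a nonempty closed set `F` of density matrices and a density matrix `ρ ∉ F`
with `R_F(ρ)` finite, the supremum of all `s > 0` such that for every `σ ∈ F` some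
`m ∈ {2, …, d}` has `S_{m,ρ,s}(σ) < 0` equals `R_F(ρ)`. -/
theorem sSup_witness_eq_robustness {d : ℕ}
    (F : Set (Matrix (Fin d) (Fin d) ℂ)) (hFne : F.Nonempty) (hFc : IsClosed F)
    (hF : ∀ σ ∈ F, IsDensityMatrix σ)
    (ρ : Matrix (Fin d) (Fin d) ℂ) (hρ : IsDensityMatrix ρ) (hρF : ρ ∉ F)
    (hfin : Robustness F ρ ≠ ⊤) :
    (⨆ s ∈ {s : ℝ | 0 < s ∧ ∀ σ ∈ F, ∃ m ∈ Finset.Icc 2 d, Sres ρ s m σ < 0},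
      ENNReal.ofReal s) = Robustness F ρ :=
  sSup_witness_eq_robustness_general F hF ρ hρ
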